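/- Let P, Q ∈ Π_n and let φ(P), φ(Q) be the binary n²×n² matrices obtained by the rule that entry (i,j) equals 1 if and only if there exist s,t ∈ {0,1,...,n−1} with i = s·n + (entry (s,t) of the given matrix) − 1 and j = t·n + (entry (n+t,s) of the given matrix) − 1. Then P and Q are disjoint elements of Π_n if and only if φ(P) and φ(Q) are disjoint binary matrices. -/
import Mathlib


/-- Row `s` (with `0 ≤ s < n`) of a `(2n) × n` matrix, as an index in `Fin (2n)`. -/
def rowT (n : ℕ) (s : Fin n) : Fin (2 * n) := ⟨s.val, by have := s.isLt; omega⟩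

/-- Row `n + t` (with `0 ≤ t < n`) of a `(2n) × n` matrix, as an index in `Fin (2n)`. -/
def rowB (n : ℕ) (t : Fin n) : Fin (2 * n) := ⟨n + t.val, by have := t.isLt; omega⟩

/-- `Π_n`: every row of the `(2n) × n` matrix is a permutation of `{1,…,n}`. -/
def IsPiMatrix (n : ℕ) (M : Fin (2 * n) → Fin n → ℕ) : Prop :=
  ∀ i : Fin (2 * n), Finset.image (M i) Finset.univ = Finset.Icc 1 n

/-- Two `Π_n` matrices `C`, `D` are disjoint if there are no indices
`s, t ∈ {0,…,n−1}` such that the ordered pair `(c_{s,t}, c_{n+t,s})` equals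
the ordered pair `(d_{s,t}, d_{n+t,s})`. -/
def PiDisjoint (n : ℕ) (C D : Fin (2 * n) → Fin n → ℕ) : Prop :=
  ¬ ∃ s t : Fin n,
    (C (rowT n s) t, C (rowB n t) s) = (D (rowT n s) t, D (rowB n t) s)

/-- Two binary matrices (of the same dimensions) are disjoint if there is no
position at which both have the entry `1`. -/
def DisjointBin (n : ℕ) (A B : Fin (n ^ 2) → Fin (n ^ 2) → ℕ) : Prop :=
  ∀ i j, ¬ (A i j = 1 ∧ B i j = 1)

/-- The map `φ` sending `M = [π_{ij}] ∈ Π_n` to the binary `n² × n²` matrix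
`A = [α_{ij}]` with `α_{ij} = 1` iff there exist `s, t ∈ {0,…,n−1}` with
`i = s·n + π_{s,t} − 1` and `j = t·n + π_{n+t,s} − 1`. -/
def phi (n : ℕ) (M : Fin (2 * n) → Fin n → ℕ) : Fin (n ^ 2) → Fin (n ^ 2) → ℕ :=
  fun i j =>
    if ∃ s t : Fin n, (i : ℕ) = s.val * n + M (rowT n s) t - 1 ∧
        (j : ℕ) = t.val * n + M (rowB n t) s - 1
    then 1 else 0

lemma entry_mem {n : ℕ} {M : Fin (2 * n) → Fin n → ℕ} (h : IsPiMatrix n M)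
    (i : Fin (2 * n)) (t : Fin n) : 1 ≤ M i t ∧ M i t ≤ n := by
  have hm : M i t ∈ Finset.Icc 1 n := by
    rw [← h i]; exact Finset.mem_image_of_mem _ (Finset.mem_univ t)
  simpa [Finset.mem_Icc] using hm

lemma uniq_decomp {n s s' a a' : ℕ} (ha : 1 ≤ a) (hb : a ≤ n) (ha' : 1 ≤ a')
    (hb' : a' ≤ n) (h : s * n + a - 1 = s' * n + a' - 1) : s = s' ∧ a = a' := by
  have hn : 0 < n := by omega
  have h' : (a - 1) + n * s = (a' - 1) + n * s' := by
    rw [Nat.mul_comm n s, Nat.mul_comm n s']; omega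
  have hs : s = s' := by
    have e1 : ((a - 1) + n * s) / n = s := by
      rw [Nat.add_mul_div_left _ _ hn, Nat.div_eq_of_lt (by omega)]; omega
    have e2 : ((a' - 1) + n * s') / n = s' := by
      rw [Nat.add_mul_div_left _ _ hn, Nat.div_eq_of_lt (by omega)]; omega
    rw [← e1, ← e2, h']
  subst hs
  have : a - 1 = a' - 1 := by omega
  omega

/-- `P, Q ∈ Π_n` are disjoint if and only if `φ(P)` and `φ(Q)`
are disjoint binary matrices. -/
theorem piDisjoint_iff_phi_disjoint (n : ℕ) (hn : 0 < n)
    (P Q : Fin (2 * n) → Fin n → ℕ)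
    (hP : IsPiMatrix n P) (hQ : IsPiMatrix n Q) :
    PiDisjoint n P Q ↔ DisjointBin n (phi n P) (phi n Q) := by
  constructor
  · intro hdisj i j ⟨hpi, hqi⟩
    rw [phi] at hpi hqi
    split_ifs at hpi with h1
    split_ifs at hqi with h2
    obtain ⟨s, t, hi1, hj1⟩ := h1
    obtain ⟨s', t', hi2, hj2⟩ := h2
    obtain ⟨ha1, ha2⟩ := entry_mem hP (rowT n s) t
    obtain ⟨hb1, hb2⟩ := entry_mem hP (rowB n t) s
    obtain ⟨hc1, hc2⟩ := entry_mem hQ (rowT n s') t'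
    obtain ⟨hd1, hd2⟩ := entry_mem hQ (rowB n t') s'
    obtain ⟨hss, hval1⟩ := uniq_decomp ha1 ha2 hc1 hc2 (hi1 ▸ hi2)
    obtain ⟨htt, hval2⟩ := uniq_decomp hb1 hb2 hd1 hd2 (hj1 ▸ hj2)
    have hs : s = s' := Fin.ext hss
    have ht : t = t' := Fin.ext htt
    subst hs; subst ht
    exact hdisj ⟨s, t, by rw [Prod.mk.injEq]; exact ⟨hval1, hval2⟩⟩
  · intro hdisj ⟨s, t, hpair⟩
    obtain ⟨h1, h2⟩ := Prod.mk.injEq .. ▸ hpair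
    obtain ⟨ha1, ha2⟩ := entry_mem hP (rowT n s) t
    obtain ⟨hb1, hb2⟩ := entry_mem hP (rowB n t) s
    have hlt : ∀ u a : ℕ, u < n → 1 ≤ a → a ≤ n → u * n + a - 1 < n ^ 2 := by
      intro u a hu h1a h2a
      have : u * n ≤ (n - 1) * n := Nat.mul_le_mul_right n (by omega)
      have hnn : n ^ 2 = n * n := sq n
      have : (n - 1) * n + n = n * n := by
        rw [Nat.sub_mul, one_mul]
        have : n ≤ n * n := Nat.le_mul_of_pos_left n hn
        omega
      omega
    refine hdisj (⟨s.val * n + P (rowT n s) t - 1, hlt s _ s.isLt ha1 ha2⟩ : Fin (n ^ 2))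
      ⟨t.val * n + P (rowB n t) s - 1, hlt t _ t.isLt hb1 hb2⟩ ⟨?_, ?_⟩
    · rw [phi, if_pos ⟨s, t, rfl, rfl⟩]
    · rw [phi, if_pos ⟨s, t, by simp [← h1], by simp [← h2]⟩]
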